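/- arXiv:2003.08255 — 2 statements merged into one kernel-verified Lean document; each statement's English description precedes it below -/
import Mathlib

section
/- Let H be a finite simple graph, let k ≥ 1 be an integer, and let H(k) be the join of H with the vertex-disjoint union of k triangles. Then cd₂(H(k)) = min( cd₂(H) + 3k, τ(H) + 2k, v(H) + k ) and τ(H(k)) = min( τ(H) + 3k, v(H) + 2k ). -/
open SimpleGraph

/-- A vertex cover: a set of vertices meeting every edge. -/
def IsVertexCover {V : Type*} (H : SimpleGraph V) (S : Set V) : Prop :=
  ∀ ⦃u v⦄, H.Adj u v → u ∈ S ∨ v ∈ S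

/-- The vertex cover number. -/
noncomputable def tauN {V : Type*} (H : SimpleGraph V) : ℕ :=
  sInf {n | ∃ S : Set V, _root_.IsVertexCover H S ∧ S.ncard = n}

/-- The 2-colorability defect: the minimum number of vertices whose removal
leaves a bipartite (i.e. 2-colorable) induced subgraph. -/
noncomputable def cd2 {V : Type*} (H : SimpleGraph V) : ℕ :=
  sInf {n | ∃ X : Set V, X.ncard = n ∧ (H.induce Xᶜ).Colorable 2}

/-- The join of two graphs on disjoint vertex sets: their disjoint union together with
all edges between a vertex of the first and a vertex of the second. -/
def gJoin {V₁ V₂ : Type*} (H₁ : SimpleGraph V₁) (H₂ : SimpleGraph V₂) :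
    SimpleGraph (V₁ ⊕ V₂) where
  Adj x y :=
    match x, y with
    | .inl a, .inl b => H₁.Adj a b
    | .inl _, .inr _ => True
    | .inr _, .inl _ => True
    | .inr a, .inr b => H₂.Adj a b
  symm := by
    constructor
    rintro (a | a) (b | b) h
    · exact h.symm
    · trivial
    · trivial
    · exact h.symm
  loopless := by
    constructor
    rintro (a | a) h
    · exact H₁.irrefl h
    · exact H₂.irrefl h

/-- The vertex-disjoint union of `k` triangles, on the vertex set `Fin k × Fin 3`. -/
def kTriangles (k : ℕ) : SimpleGraph (Fin k × Fin 3) where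
  Adj p q := p.1 = q.1 ∧ p.2 ≠ q.2
  symm := by
    constructor
    rintro p q ⟨h1, h2⟩
    exact ⟨h1.symm, h2.symm⟩
  loopless := by
    constructor
    rintro p ⟨-, h⟩
    exact h rfl

/-- `Hk H k` is the join of `H` with the vertex-disjoint union of `k` triangles. -/
def Hk {V : Type*} (H : SimpleGraph V) (k : ℕ) : SimpleGraph (V ⊕ Fin k × Fin 3) :=
  gJoin H (kTriangles k)

/-!
In a join every vertex of one side is adjacent to every vertex of the other. Hence a vertex
cover of `gJoin H₁ H₂` contains one whole side, and a set `X` whose removal leaves vertices on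
both sides leaves a bipartite graph only if `X` meets each side in a vertex cover, since an edge
left on one side together with a vertex left on the other is a triangle. This gives
`τ(H₁ ∨ H₂) = min (τ(H₁) + v(H₂)) (v(H₁) + τ(H₂))` and
`cd₂(H₁ ∨ H₂) = min (cd₂(H₁) + v(H₂)) (min (τ(H₁) + τ(H₂)) (v(H₁) + cd₂(H₂)))`.
For `k` disjoint triangles `τ = 2k` and `cd₂ = k`, as each triangle must lose two vertices to
lose its edges and one vertex to become bipartite.
-/

section Basic

variable {V : Type*} (H : SimpleGraph V)

theorem exists_isVertexCover_ncard_eq_tauN :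
    ∃ S : Set V, _root_.IsVertexCover H S ∧ S.ncard = tauN H :=
  Nat.sInf_mem (s := {n | ∃ S : Set V, _root_.IsVertexCover H S ∧ S.ncard = n})
    ⟨_, Set.univ, fun _ _ _ => Or.inl trivial, rfl⟩

theorem exists_colorable_induce_compl_ncard_eq_cd2 :
    ∃ X : Set V, X.ncard = cd2 H ∧ (H.induce Xᶜ).Colorable 2 :=
  Nat.sInf_mem (s := {n | ∃ X : Set V, X.ncard = n ∧ (H.induce Xᶜ).Colorable 2})
    ⟨_, Set.univ, rfl, by
      have : IsEmpty ↥(Set.univ : Set V)ᶜ := by simp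
      exact .of_isEmpty 2⟩

variable {H}

theorem tauN_le_ncard {S : Set V} (hS : _root_.IsVertexCover H S) : tauN H ≤ S.ncard :=
  Nat.sInf_le ⟨S, hS, rfl⟩

theorem cd2_le_ncard {X : Set V} (hX : (H.induce Xᶜ).Colorable 2) : cd2 H ≤ X.ncard :=
  Nat.sInf_le ⟨X, rfl, hX⟩

theorem le_tauN {n : ℕ} (h : ∀ S : Set V, _root_.IsVertexCover H S → n ≤ S.ncard) :
    n ≤ tauN H := by
  obtain ⟨S, hS, hSc⟩ := exists_isVertexCover_ncard_eq_tauN H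
  exact hSc ▸ h S hS

theorem le_cd2 {n : ℕ} (h : ∀ X : Set V, (H.induce Xᶜ).Colorable 2 → n ≤ X.ncard) :
    n ≤ cd2 H := by
  obtain ⟨X, hXc, hX⟩ := exists_colorable_induce_compl_ncard_eq_cd2 H
  exact hXc ▸ h X hX

theorem SimpleGraph.Colorable.not_adj_of_adj_of_adj {G : SimpleGraph V} (hG : G.Colorable 2)
    {u v w : V} (huw : G.Adj u w) (hvw : G.Adj v w) : ¬ G.Adj u v := by
  classical
  exact fun huv => hG.cliqueFree (by norm_num : 2 < 3) {u, v, w}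
    (is3Clique_triple_iff.2 ⟨huv, huw, hvw⟩)

end Basic

theorem Set.ncard_eq_ncard_preimage_inl_add_ncard_preimage_inr {α β : Type*} [Finite α]
    [Finite β] (s : Set (α ⊕ β)) :
    s.ncard = (Sum.inl ⁻¹' s).ncard + (Sum.inr ⁻¹' s).ncard := by
  conv_lhs => rw [← Set.image_preimage_inl_union_image_preimage_inr s]
  rw [Set.ncard_union_eq Set.disjoint_image_inl_image_inr,
    Set.ncard_image_of_injective _ Sum.inl_injective,
    Set.ncard_image_of_injective _ Sum.inr_injective]

theorem Set.exists_preimage_inl_eq_and_preimage_inr_eq {α β : Type*} (A : Set α) (B : Set β) :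
    ∃ s : Set (α ⊕ β), Sum.inl ⁻¹' s = A ∧ Sum.inr ⁻¹' s = B :=
  ⟨Set.sumEquiv.symm (A, B), Prod.ext_iff.1 (Set.sumEquiv.apply_symm_apply (A, B))⟩

theorem Set.card_mul_le_ncard_of_le_ncard_fiber {α β : Type*} [Fintype α] [Finite β]
    {T : Set (α × β)} {n : ℕ} (h : ∀ i, n ≤ (T ∩ Prod.fst ⁻¹' {i}).ncard) :
    Fintype.card α * n ≤ T.ncard := by
  classical
  have := Fintype.ofFinite β
  rw [Set.ncard_eq_toFinset_card', mul_comm, ← Finset.card_univ]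
  refine Finset.mul_card_image_le_card_of_maps_to (f := Prod.fst)
    (fun _ _ => Finset.mem_univ _) n fun i _ => (h i).trans_eq ?_
  rw [Set.ncard_eq_toFinset_card']
  congr 1
  ext
  simp

section Join

variable {V₁ V₂ : Type*} {H₁ : SimpleGraph V₁} {H₂ : SimpleGraph V₂}

theorem isVertexCover_gJoin_iff {S : Set (V₁ ⊕ V₂)} :
    _root_.IsVertexCover (gJoin H₁ H₂) S ↔
      _root_.IsVertexCover H₁ (Sum.inl ⁻¹' S) ∧ _root_.IsVertexCover H₂ (Sum.inr ⁻¹' S) ∧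
        (Sum.inl ⁻¹' S = Set.univ ∨ Sum.inr ⁻¹' S = Set.univ) := by
  constructor
  · intro hS
    refine ⟨fun a b h => hS (u := .inl a) (v := .inl b) h,
      fun a b h => hS (u := .inr a) (v := .inr b) h, ?_⟩
    by_contra! h
    obtain ⟨a, ha⟩ := Set.ne_univ_iff_exists_notMem _ |>.1 h.1
    obtain ⟨b, hb⟩ := Set.ne_univ_iff_exists_notMem _ |>.1 h.2
    exact (hS (u := .inl a) (v := .inr b) trivial).elim ha hb
  · rintro ⟨h₁, h₂, hA | hB⟩ (a | a) (b | b) h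
    exacts [h₁ h, .inl (Set.eq_univ_iff_forall.1 hA a), .inr (Set.eq_univ_iff_forall.1 hA b),
      h₂ h, h₁ h, .inr (Set.eq_univ_iff_forall.1 hB b), .inl (Set.eq_univ_iff_forall.1 hB a),
      h₂ h]

theorem colorable_induce_compl_gJoin_iff_of_preimage_inr_eq_univ {X : Set (V₁ ⊕ V₂)} {n : ℕ}
    (hX : Sum.inr ⁻¹' X = Set.univ) :
    ((gJoin H₁ H₂).induce Xᶜ).Colorable n ↔ (H₁.induce (Sum.inl ⁻¹' X)ᶜ).Colorable n := by
  constructor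
  · exact .of_hom ⟨fun a => ⟨.inl a.1, a.2⟩, fun h => h⟩
  · have hX' (b : V₂) : Sum.inr b ∈ X := Set.eq_univ_iff_forall.1 hX b
    refine .of_hom ⟨fun
      | ⟨.inl a, h⟩ => ⟨a, h⟩
      | ⟨.inr b, h⟩ => absurd (hX' b) h, ?_⟩
    rintro ⟨a | b, ha⟩ ⟨a' | b', ha'⟩ h
    exacts [h, absurd (hX' b') ha', absurd (hX' b) ha, absurd (hX' b) ha]

theorem colorable_induce_compl_gJoin_iff_of_preimage_inl_eq_univ {X : Set (V₁ ⊕ V₂)} {n : ℕ}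
    (hX : Sum.inl ⁻¹' X = Set.univ) :
    ((gJoin H₁ H₂).induce Xᶜ).Colorable n ↔ (H₂.induce (Sum.inr ⁻¹' X)ᶜ).Colorable n := by
  constructor
  · exact .of_hom ⟨fun b => ⟨.inr b.1, b.2⟩, fun h => h⟩
  · have hX' (a : V₁) : Sum.inl a ∈ X := Set.eq_univ_iff_forall.1 hX a
    refine .of_hom ⟨fun
      | ⟨.inl a, h⟩ => absurd (hX' a) h
      | ⟨.inr b, h⟩ => ⟨b, h⟩, ?_⟩
    rintro ⟨a | b, hb⟩ ⟨a' | b', hb'⟩ h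
    exacts [absurd (hX' a) hb, absurd (hX' a) hb, absurd (hX' a') hb', h]

theorem colorable_induce_compl_gJoin_of_isVertexCover {X : Set (V₁ ⊕ V₂)}
    (h₁ : _root_.IsVertexCover H₁ (Sum.inl ⁻¹' X)) (h₂ : _root_.IsVertexCover H₂ (Sum.inr ⁻¹' X)) :
    ((gJoin H₁ H₂).induce Xᶜ).Colorable 2 := by
  refine ⟨.mk (fun v => Sum.elim (fun _ => 0) (fun _ => 1) v.1) ?_⟩
  rintro ⟨a | a, ha⟩ ⟨b | b, hb⟩ h
  exacts [((h₁ h).elim ha hb).elim, zero_ne_one, one_ne_zero, ((h₂ h).elim ha hb).elim]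

theorem isVertexCover_preimage_inl_of_colorable {X : Set (V₁ ⊕ V₂)}
    (hX : ((gJoin H₁ H₂).induce Xᶜ).Colorable 2) {b : V₂} (hb : Sum.inr b ∉ X) :
    _root_.IsVertexCover H₁ (Sum.inl ⁻¹' X) := by
  intro u v h
  by_contra! huv
  exact hX.not_adj_of_adj_of_adj (u := ⟨.inl u, huv.1⟩) (v := ⟨.inl v, huv.2⟩)
    (w := ⟨.inr b, hb⟩) trivial trivial h

theorem isVertexCover_preimage_inr_of_colorable {X : Set (V₁ ⊕ V₂)}
    (hX : ((gJoin H₁ H₂).induce Xᶜ).Colorable 2) {a : V₁} (ha : Sum.inl a ∉ X) :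
    _root_.IsVertexCover H₂ (Sum.inr ⁻¹' X) := by
  intro u v h
  by_contra! huv
  exact hX.not_adj_of_adj_of_adj (u := ⟨.inr u, huv.1⟩) (v := ⟨.inr v, huv.2⟩)
    (w := ⟨.inl a, ha⟩) trivial trivial h

variable [Fintype V₁] [Fintype V₂]

theorem tauN_gJoin :
    tauN (gJoin H₁ H₂) = min (tauN H₁ + Fintype.card V₂) (Fintype.card V₁ + tauN H₂) := by
  refine le_antisymm (le_min ?_ ?_) (le_tauN fun S hS => ?_)
  · obtain ⟨S₁, hS₁, hS₁c⟩ := exists_isVertexCover_ncard_eq_tauN H₁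
    obtain ⟨S, hA, hB⟩ := Set.exists_preimage_inl_eq_and_preimage_inr_eq S₁ Set.univ
    have hS : _root_.IsVertexCover (gJoin H₁ H₂) S :=
      isVertexCover_gJoin_iff.2 ⟨hA ▸ hS₁, hB ▸ fun _ _ _ => .inl trivial, .inr hB⟩
    simpa [Set.ncard_eq_ncard_preimage_inl_add_ncard_preimage_inr S, hA, hB, hS₁c]
      using tauN_le_ncard hS
  · obtain ⟨S₂, hS₂, hS₂c⟩ := exists_isVertexCover_ncard_eq_tauN H₂
    obtain ⟨S, hA, hB⟩ := Set.exists_preimage_inl_eq_and_preimage_inr_eq Set.univ S₂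
    have hS : _root_.IsVertexCover (gJoin H₁ H₂) S :=
      isVertexCover_gJoin_iff.2 ⟨hA ▸ fun _ _ _ => .inl trivial, hB ▸ hS₂, .inl hA⟩
    simpa [Set.ncard_eq_ncard_preimage_inl_add_ncard_preimage_inr S, hA, hB, hS₂c]
      using tauN_le_ncard hS
  · obtain ⟨h₁, h₂, hA | hB⟩ := isVertexCover_gJoin_iff.1 hS <;>
      rw [Set.ncard_eq_ncard_preimage_inl_add_ncard_preimage_inr S]
    · rw [hA, Set.ncard_univ, Nat.card_eq_fintype_card]
      exact min_le_of_right_le (Nat.add_le_add_left (tauN_le_ncard h₂) _)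
    · rw [hB, Set.ncard_univ, Nat.card_eq_fintype_card]
      exact min_le_of_left_le (Nat.add_le_add_right (tauN_le_ncard h₁) _)

theorem cd2_gJoin_le : cd2 (gJoin H₁ H₂) ≤
    min (cd2 H₁ + Fintype.card V₂) (min (tauN H₁ + tauN H₂) (Fintype.card V₁ + cd2 H₂)) := by
  refine le_min ?_ (le_min ?_ ?_)
  · obtain ⟨X₁, hX₁c, hX₁⟩ := exists_colorable_induce_compl_ncard_eq_cd2 H₁
    obtain ⟨X, hA, hB⟩ := Set.exists_preimage_inl_eq_and_preimage_inr_eq X₁ Set.univ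
    have hX := (colorable_induce_compl_gJoin_iff_of_preimage_inr_eq_univ (H₂ := H₂) hB).2
      (hA ▸ hX₁)
    simpa [Set.ncard_eq_ncard_preimage_inl_add_ncard_preimage_inr X, hA, hB, hX₁c]
      using cd2_le_ncard hX
  · obtain ⟨S₁, hS₁, hS₁c⟩ := exists_isVertexCover_ncard_eq_tauN H₁
    obtain ⟨S₂, hS₂, hS₂c⟩ := exists_isVertexCover_ncard_eq_tauN H₂
    obtain ⟨X, hA, hB⟩ := Set.exists_preimage_inl_eq_and_preimage_inr_eq S₁ S₂
    have hX := colorable_induce_compl_gJoin_of_isVertexCover (hA ▸ hS₁) (hB ▸ hS₂)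
    simpa [Set.ncard_eq_ncard_preimage_inl_add_ncard_preimage_inr X, hA, hB, hS₁c, hS₂c]
      using cd2_le_ncard hX
  · obtain ⟨X₂, hX₂c, hX₂⟩ := exists_colorable_induce_compl_ncard_eq_cd2 H₂
    obtain ⟨X, hA, hB⟩ := Set.exists_preimage_inl_eq_and_preimage_inr_eq Set.univ X₂
    have hX := (colorable_induce_compl_gJoin_iff_of_preimage_inl_eq_univ (H₁ := H₁) hA).2
      (hB ▸ hX₂)
    simpa [Set.ncard_eq_ncard_preimage_inl_add_ncard_preimage_inr X, hA, hB, hX₂c]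
      using cd2_le_ncard hX

theorem le_cd2_gJoin :
    min (cd2 H₁ + Fintype.card V₂) (min (tauN H₁ + tauN H₂) (Fintype.card V₁ + cd2 H₂)) ≤
      cd2 (gJoin H₁ H₂) := by
  refine le_cd2 fun X hX => ?_
  rw [Set.ncard_eq_ncard_preimage_inl_add_ncard_preimage_inr X]
  by_cases hB : Sum.inr ⁻¹' X = Set.univ
  · have h₁ := cd2_le_ncard ((colorable_induce_compl_gJoin_iff_of_preimage_inr_eq_univ hB).1 hX)
    rw [hB, Set.ncard_univ, Nat.card_eq_fintype_card]
    exact min_le_of_left_le (Nat.add_le_add_right h₁ _)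
  by_cases hA : Sum.inl ⁻¹' X = Set.univ
  · have h₂ := cd2_le_ncard ((colorable_induce_compl_gJoin_iff_of_preimage_inl_eq_univ hA).1 hX)
    rw [hA, Set.ncard_univ, Nat.card_eq_fintype_card]
    exact min_le_of_right_le (min_le_of_right_le (Nat.add_le_add_left h₂ _))
  obtain ⟨a, ha⟩ := Set.ne_univ_iff_exists_notMem _ |>.1 hA
  obtain ⟨b, hb⟩ := Set.ne_univ_iff_exists_notMem _ |>.1 hB
  have h₁ := tauN_le_ncard (isVertexCover_preimage_inl_of_colorable hX hb)
  have h₂ := tauN_le_ncard (isVertexCover_preimage_inr_of_colorable hX ha)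
  exact min_le_of_right_le (min_le_of_left_le (Nat.add_le_add h₁ h₂))

theorem cd2_gJoin : cd2 (gJoin H₁ H₂) =
    min (cd2 H₁ + Fintype.card V₂) (min (tauN H₁ + tauN H₂) (Fintype.card V₁ + cd2 H₂)) :=
  le_antisymm cd2_gJoin_le le_cd2_gJoin

end Join

section Triangles

variable {k : ℕ}

theorem two_le_ncard_inter_of_isVertexCover_kTriangles {S : Set (Fin k × Fin 3)}
    (hS : _root_.IsVertexCover (kTriangles k) S) (i : Fin k) :
    2 ≤ (S ∩ Prod.fst ⁻¹' {i}).ncard := by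
  have hS' (x y : Fin 3) (hxy : x ≠ y) : (i, x) ∈ S ∨ (i, y) ∈ S := hS ⟨rfl, hxy⟩
  show 1 < _
  rw [Set.one_lt_ncard]
  rcases hS' 0 1 (by decide) with h0 | h1
  · rcases hS' 1 2 (by decide) with h1 | h2
    exacts [⟨_, ⟨h0, rfl⟩, _, ⟨h1, rfl⟩, by simp⟩, ⟨_, ⟨h0, rfl⟩, _, ⟨h2, rfl⟩, by simp⟩]
  · rcases hS' 0 2 (by decide) with h0 | h2
    exacts [⟨_, ⟨h0, rfl⟩, _, ⟨h1, rfl⟩, by simp⟩, ⟨_, ⟨h1, rfl⟩, _, ⟨h2, rfl⟩, by simp⟩]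

theorem one_le_ncard_inter_of_colorable_kTriangles {X : Set (Fin k × Fin 3)}
    (hX : ((kTriangles k).induce Xᶜ).Colorable 2) (i : Fin k) :
    1 ≤ (X ∩ Prod.fst ⁻¹' {i}).ncard := by
  rw [Nat.one_le_iff_ne_zero, Ne, Set.ncard_eq_zero, Set.eq_empty_iff_forall_notMem]
  intro hX'
  have hnot (x : Fin 3) : (i, x) ∉ X := fun h => hX' (i, x) ⟨h, rfl⟩
  exact hX.not_adj_of_adj_of_adj (u := ⟨(i, 0), hnot 0⟩) (v := ⟨(i, 1), hnot 1⟩)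
    (w := ⟨(i, 2), hnot 2⟩) ⟨rfl, (by decide : (0 : Fin 3) ≠ 2)⟩
    ⟨rfl, (by decide : (1 : Fin 3) ≠ 2)⟩ ⟨rfl, (by decide : (0 : Fin 3) ≠ 1)⟩

theorem tauN_kTriangles : tauN (kTriangles k) = 2 * k := by
  refine le_antisymm ?_ (le_tauN fun S hS => ?_)
  · have hS : _root_.IsVertexCover (kTriangles k) (Set.univ ×ˢ {2}ᶜ) := by
      intro p q h
      simp only [Set.mem_prod, Set.mem_univ, Set.mem_compl_singleton_iff, true_and]
      by_contra! hpq
      exact h.2 (hpq.1.trans hpq.2.symm)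
    simpa [Set.ncard_eq_toFinset_card', Finset.card_compl, mul_comm] using tauN_le_ncard hS
  · simpa [mul_comm] using Set.card_mul_le_ncard_of_le_ncard_fiber
      (two_le_ncard_inter_of_isVertexCover_kTriangles hS)

theorem cd2_kTriangles : cd2 (kTriangles k) = k := by
  refine le_antisymm ?_ (le_cd2 fun X hX => ?_)
  · -- the surviving labels `0, 1` are the values of `Fin 3` below `Fin.last 2`, i.e. colours
    have hX : ((kTriangles k).induce (Set.univ ×ˢ {2})ᶜ).Colorable 2 :=
      ⟨.mk (fun p => p.1.2.castPred fun h => p.2 ⟨trivial, h⟩)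
        fun h heq => h.2 (Fin.castPred_inj.1 heq)⟩
    simpa [Set.ncard_eq_toFinset_card'] using cd2_le_ncard hX
  · simpa using Set.card_mul_le_ncard_of_le_ncard_fiber
      (one_le_ncard_inter_of_colorable_kTriangles hX)

end Triangles

theorem cd2_tauN_Hk_general {V : Type*} [Fintype V] (H : SimpleGraph V) (k : ℕ) :
    cd2 (Hk H k) =
        min (cd2 H + 3 * k) (min (tauN H + 2 * k) (Fintype.card V + k)) ∧
      tauN (Hk H k) = min (tauN H + 3 * k) (Fintype.card V + 2 * k) := by
  have hcard : Fintype.card (Fin k × Fin 3) = 3 * k := by simp [mul_comm]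
  exact ⟨by rw [Hk, cd2_gJoin, tauN_kTriangles, cd2_kTriangles, hcard],
    by rw [Hk, tauN_gJoin, tauN_kTriangles, hcard]⟩

/-- The 2-colorability defect and the vertex cover number of the join of `H` with `k`
vertex-disjoint triangles. -/
theorem cd2_tauN_Hk {V : Type*} [Fintype V] (H : SimpleGraph V) (k : ℕ) (hk : 1 ≤ k) :
    cd2 (Hk H k) =
        min (cd2 H + 3 * k) (min (tauN H + 2 * k) (Fintype.card V + k)) ∧
      tauN (Hk H k) = min (tauN H + 3 * k) (Fintype.card V + 2 * k) :=
  cd2_tauN_Hk_general H k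
end

section
/- Let H be a finite connected triangle-free simple graph with at least one edge, let k ≥ 1 be an integer, let H(k) be the join of H with the vertex-disjoint union of k triangles, and let G(k) = KG(H(k)) be the complement of the line graph of H(k). Then χ(G(k)) = min( τ(H) + 3k, v(H) + k ). -/
open SimpleGraph

/-- `KG H` is the complement of the line graph of `H`: its vertices are the edges of `H`,
two of them being adjacent exactly when the corresponding edges of `H` are disjoint. -/
def KG {V : Type*} (H : SimpleGraph V) : SimpleGraph H.edgeSet where
  Adj e f := e ≠ f ∧ ∀ v, v ∈ (e : Sym2 V) → v ∉ (f : Sym2 V)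
  symm := by
    constructor
    rintro e f ⟨hne, h⟩
    exact ⟨hne.symm, fun v hvf hve => h v hve hvf⟩
  loopless := by
    constructor
    rintro e ⟨hne, -⟩
    exact hne rfl

/-- The chromatic number: least `n` such that `G` has a proper coloring with `n` colors. -/
noncomputable def chromNum {W : Type*} (G : SimpleGraph W) : ℕ :=
  sInf {n | G.Colorable n}

/-!
A colour class of a proper colouring of `KG F` is a set of pairwise intersecting edges of `F`, so it
lies in a star or in a triangle; as `H` is triangle-free, a triangle of `Hk H k` is an edge `uv` of
`H` with a triangle vertex, a vertex of `H` with an edge of a triangle, or a whole triangle.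

The upper bounds colour each edge by a vertex on it from a minimum vertex cover of `H` or from the
triangles, respectively by a vertex of `H` on it or else by its triangle.

For the lower bound, call a vertex of `H` a centre if some class is the star at it, and let `x` be
the number of the other vertices. The edges of each triangle need classes at that triangle; call a
triangle sparse if at most two of them avoid `H`. Then some corner `w` of it centres no star, and
the `x` edges from non-centres to `w` need classes of their own: either the triangle carries more
than `x` classes, or exactly two stars and triangles `uvw` (`uv` in `H`) covering all non-centres.
Since `τ(H)` is at most the number of centres plus the number of classes through edges of `H`,
fewer than `min (τ(H) + 3k) (v(H) + k)` colours force a sparse triangle, and in fact two of them,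
which cost `x + k + 2` colours: with only one, the edges `uv` above cover all non-centres, and as
`H` is connected and triangle-free this improves the vertex cover bound by one.
-/

open Finset

theorem Sym2.star_or_triangle {W : Type*} [Nonempty W] {K : Set (Sym2 W)}
    (hdiag : ∀ e ∈ K, ¬ e.IsDiag) (hmeet : ∀ e ∈ K, ∀ f ∈ K, ∃ x, x ∈ e ∧ x ∈ f) :
    (∃ p, ∀ e ∈ K, p ∈ e) ∨
      ∃ p q r, s(p, q) ∈ K ∧ s(p, r) ∈ K ∧ s(q, r) ∈ K ∧
        ∀ e ∈ K, ∀ x ∈ e, x = p ∨ x = q ∨ x = r := by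
  refine or_iff_not_imp_left.mpr fun hstar => ?_
  push Not at hstar
  obtain ⟨e, he, -⟩ := hstar (Classical.arbitrary W)
  induction e using Sym2.ind with | _ p q => ?_
  obtain ⟨f, hf, hpf⟩ := hstar p
  obtain ⟨g, hg, hqg⟩ := hstar q
  have hqf : q ∈ f := by
    obtain ⟨x, hx, hxf⟩ := hmeet _ he _ hf
    rcases Sym2.mem_iff.mp hx with rfl | rfl
    exacts [absurd hxf hpf, hxf]
  obtain ⟨r, rfl⟩ := Sym2.mem_iff_exists.mp hqf
  have hpg : p ∈ g := by
    obtain ⟨x, hx, hxg⟩ := hmeet _ he _ hg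
    rcases Sym2.mem_iff.mp hx with rfl | rfl
    exacts [hxg, absurd hxg hqg]
  have hrg : r ∈ g := by
    obtain ⟨x, hx, hxg⟩ := hmeet _ hf _ hg
    rcases Sym2.mem_iff.mp hx with rfl | rfl
    exacts [absurd hxg hqg, hxg]
  have hpr : p ≠ r := by rintro rfl; simp at hpf
  rw [(Sym2.mem_and_mem_iff hpr).mp ⟨hpg, hrg⟩] at hg
  refine ⟨p, q, r, he, hg, hf, fun e he' => ?_⟩
  -- `e` has two distinct ends and meets each side of the triangle `pqr`
  have := hdiag _ he
  have := hdiag _ he'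
  obtain ⟨x, hx, hxe⟩ := hmeet _ he _ he'
  obtain ⟨y, hy, hye⟩ := hmeet _ hf _ he'
  obtain ⟨z, hz, hze⟩ := hmeet _ hg _ he'
  induction e using Sym2.ind with | _ a b => ?_
  simp only [Sym2.mem_iff, Sym2.mk_isDiag_iff] at *
  grind

lemma Finset.card_le_sum_of_card_fiber_le {ι α : Type*} [Fintype α] [DecidableEq α]
    (X : Finset ι) (f : ι → α) (w : α → ℕ) (h : ∀ c, #{x ∈ X | f x = c} ≤ w c) :
    #X ≤ ∑ c, w c := by
  rw [card_eq_sum_card_fiberwise (f := f) (t := univ) fun _ _ => mem_univ _]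
  exact sum_le_sum fun c _ => h c

namespace KG

variable {W α : Type*} {F : SimpleGraph W}

lemma exists_mem_mem_of_color_eq (C : (KG F).Coloring α) {e f : F.edgeSet} (h : C e = C f) :
    ∃ x, x ∈ (e : Sym2 W) ∧ x ∈ (f : Sym2 W) := by
  by_cases hef : e = f
  · subst hef
    induction (e : Sym2 W) using Sym2.ind with | _ x y => exact ⟨x, by simp, by simp⟩
  · by_contra! hdisj
    exact C.valid ⟨hef, hdisj⟩ h

def coloringOfMeet (f : F.edgeSet → α)
    (hf : ∀ e e', f e = f e' → ∃ x, x ∈ (e : Sym2 W) ∧ x ∈ (e' : Sym2 W)) : (KG F).Coloring α :=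
  Coloring.mk f fun {e e'} hadj heq => by
    obtain ⟨x, hx, hx'⟩ := hf e e' heq
    exact hadj.2 x hx hx'

lemma colorable_of_forall_exists_mem (T : Finset W)
    (hT : ∀ e : F.edgeSet, ∃ x ∈ T, x ∈ (e : Sym2 W)) : (KG F).Colorable #T := by
  choose f hfT hf using hT
  simpa using (coloringOfMeet (fun e => (⟨f e, hfT e⟩ : T)) fun e e' heq =>
    ⟨f e, hf e, by rw [show f e = f e' from congrArg Subtype.val heq]; exact hf e'⟩).colorable

end KG

namespace SimpleGraph

variable {V : Type*} {H : SimpleGraph V}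

lemma Connected.exists_adj_adj_ne [Fintype V] (hconn : H.Connected) (hV : 3 ≤ Fintype.card V) :
    ∃ a b c, H.Adj a b ∧ H.Adj a c ∧ b ≠ c := by
  obtain ⟨x, y, z, hxy, hxz, hyz⟩ := Fintype.two_lt_card_iff.mp hV
  by_cases hx : H.Adj x y ∧ H.Adj x z
  · exact ⟨x, y, z, hx.1, hx.2, hyz⟩
  -- otherwise the middle vertex of a shortest path between non-adjacent vertices works
  obtain ⟨y', hxy', hnadj⟩ : ∃ y', x ≠ y' ∧ ¬ H.Adj x y' := by
    by_cases h : H.Adj x y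
    · exact ⟨z, hxz, fun h' => hx ⟨h, h'⟩⟩
    · exact ⟨y, hxy, h⟩
  obtain ⟨p, hp⟩ := (hconn x y').exists_path_of_dist
  obtain ⟨a, b, c, hab, hbc, -, hac⟩ := Walk.exists_adj_adj_not_adj_ne hp.2
    ((hconn x y').one_lt_dist_of_ne_of_not_adj hxy' hnadj)
  exact ⟨b, a, c, hab.symm, hbc, hac⟩

end SimpleGraph

section VertexCover

variable {V : Type*} {H : SimpleGraph V}

lemma tauN_le_card {S : Finset V} (hS : ∀ ⦃u v⦄, H.Adj u v → u ∈ S ∨ v ∈ S) : tauN H ≤ #S :=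
  Nat.sInf_le ⟨S, fun _ _ h => by simpa using hS h, Set.ncard_coe_finset S⟩

lemma exists_isVertexCover_card_eq_tauN [Fintype V] (H : SimpleGraph V) :
    ∃ S : Finset V, _root_.IsVertexCover H S ∧ #S = tauN H := by
  classical
  obtain ⟨S, hS, hcard⟩ :=
    Nat.sInf_mem (s := {n | ∃ S : Set V, _root_.IsVertexCover H S ∧ S.ncard = n})
      ⟨_, Set.univ, fun _ _ _ => Or.inl trivial, rfl⟩
  exact ⟨S.toFinset, by simpa using hS, by rw [← Set.ncard_eq_toFinset_card']; exact hcard⟩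

variable [DecidableEq V]

lemma tauN_le_card_add_card {S : Finset V} {D : Finset (Sym2 V)}
    (h : ∀ ⦃u v⦄, H.Adj u v → u ∈ S ∨ v ∈ S ∨ s(u, v) ∈ D) : tauN H ≤ #S + #D := by
  calc tauN H ≤ #(S ∪ D.image fun e => e.out.1) := tauN_le_card fun u v huv => by
        rcases h huv with hu | hv | huvD
        · exact .inl (mem_union_left _ hu)
        · exact .inr (mem_union_left _ hv)
        · have hmem := mem_image_of_mem (fun e : Sym2 V => e.out.1) huvD
          rcases Sym2.mem_iff.mp (Sym2.out_fst_mem s(u, v)) with h | h <;> rw [h] at hmem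
          exacts [.inl (mem_union_right _ hmem), .inr (mem_union_right _ hmem)]
    _ ≤ #S + #D := (card_union_le _ _).trans (Nat.add_le_add_left card_image_le _)

/-- Two edges of `D` at a common vertex `a` can be traded for `a`. -/
lemma tauN_lt_card_of_adj_adj {D : Finset (Sym2 V)} (hD : ∀ ⦃u v⦄, H.Adj u v → s(u, v) ∈ D)
    {a b c : V} (hab : H.Adj a b) (hac : H.Adj a c) (hbc : b ≠ c) : tauN H < #D := by
  have hcb : s(a, c) ∈ D.erase s(a, b) := mem_erase.mpr ⟨by simp [hbc.symm, hab.ne], hD hac⟩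
  have := card_pos.mpr ⟨_, hcb⟩
  calc tauN H ≤ #{a} + #((D.erase s(a, b)).erase s(a, c)) :=
        tauN_le_card_add_card fun u v huv => by
          by_cases hu : u = a; · simp [hu]
          by_cases hv : v = a; · simp [hv]
          refine .inr (.inr (mem_erase.mpr ⟨?_, mem_erase.mpr ⟨?_, hD huv⟩⟩)) <;> simp [hu, hv]
    _ < #D := by
        rw [card_erase_of_mem hcb, card_singleton]
        rw [card_erase_of_mem (hD hab)] at this ⊢
        omega

/-- A vertex `a ∈ A` can be dropped from the cover if, on each edge of `D`, we pick a neighbour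
of `a` when there is one: a neighbour `v ∉ A` of `a` lies on an edge `vv'` of `D`, and `v'` is not a
neighbour of `a` since `H` is triangle-free. -/
lemma tauN_lt_card_add_card_of_mem (htf : H.CliqueFree 3) {A : Finset V} {D : Finset (Sym2 V)}
    (hcov : ∀ ⦃u v⦄, H.Adj u v → u ∈ A ∨ v ∈ A ∨ s(u, v) ∈ D)
    (hmatch : ∀ u ∉ A, ∃ v, H.Adj u v ∧ s(u, v) ∈ D) {a : V} (ha : a ∈ A) :
    tauN H < #A + #D := by
  have hpick : ∀ e : Sym2 V, ∃ z ∈ e, (∃ y ∈ e, H.Adj a y) → H.Adj a z := fun e => by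
    by_cases h : ∃ y ∈ e, H.Adj a y
    · obtain ⟨y, hy, hay⟩ := h
      exact ⟨y, hy, fun _ => hay⟩
    · exact ⟨e.out.1, Sym2.out_fst_mem e, fun h' => absurd h' h⟩
  choose pk hpk using hpick
  have hnbr : ∀ v ∉ A, H.Adj a v → v ∈ D.image pk := fun v hv hav => by
    obtain ⟨v', hvv', hD⟩ := hmatch v hv
    obtain ⟨hmem, hadj⟩ := hpk s(v, v')
    rcases Sym2.mem_iff.mp hmem with h | h
    · exact mem_image.mpr ⟨_, hD, h⟩
    · have hav' : H.Adj a v' := h ▸ hadj ⟨v, by simp, hav⟩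
      exact (isIndepSet_neighborSet_of_triangleFree _ htf a hav hav' hvv'.ne hvv').elim
  calc tauN H ≤ #(A.erase a ∪ D.image pk) := tauN_le_card fun u v huv => by
        by_cases hu : u ∈ A.erase a; · exact .inl (mem_union_left _ hu)
        by_cases hv : v ∈ A.erase a; · exact .inr (mem_union_left _ hv)
        rw [mem_erase, not_and_or, not_not] at hu hv
        rcases hu with rfl | hu
        · exact .inr (mem_union_right _ (hnbr v (hv.resolve_left huv.ne.symm) huv))
        rcases hv with rfl | hv
        · exact .inl (mem_union_right _ (hnbr u hu huv.symm))
        obtain ⟨hmem, -⟩ := hpk s(u, v)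
        have huvD := ((hcov huv).resolve_left hu).resolve_left hv
        rcases Sym2.mem_iff.mp hmem with h | h
        · exact .inl (mem_union_right _ (mem_image.mpr ⟨_, huvD, h⟩))
        · exact .inr (mem_union_right _ (mem_image.mpr ⟨_, huvD, h⟩))
    _ ≤ #(A.erase a) + #D := (card_union_le _ _).trans (Nat.add_le_add_left card_image_le _)
    _ < #A + #D := by rw [card_erase_of_mem ha]; have := card_pos.mpr ⟨a, ha⟩; omega

lemma tauN_lt_card_add_card [Fintype V] (hconn : H.Connected) (htf : H.CliqueFree 3)
    {A : Finset V} {D : Finset (Sym2 V)}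
    (hcov : ∀ ⦃u v⦄, H.Adj u v → u ∈ A ∨ v ∈ A ∨ s(u, v) ∈ D)
    (hmatch : ∀ u ∉ A, ∃ v, H.Adj u v ∧ s(u, v) ∈ D) (hA : 3 ≤ #Aᶜ) :
    tauN H < #A + #D := by
  rcases A.eq_empty_or_nonempty with rfl | ⟨a, ha⟩
  · obtain ⟨a, b, c, hab, hac, hbc⟩ := hconn.exists_adj_adj_ne (by simpa using hA)
    simpa using tauN_lt_card_of_adj_adj (fun u v huv => by simpa using hcov huv) hab hac hbc
  · exact tauN_lt_card_add_card_of_mem htf hcov hmatch ha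

end VertexCover

section TriangleCounts

/-! `s i`, `e i`, `j i`, `t i` count the classes at triangle `i` that are stars, triangles through
an edge of `H`, triangles through one vertex of `H`, and the triangle itself. -/

variable {k x : ℕ} {s e j t : Fin k → ℕ}

lemma three_mul_le_sum_add_card_sparse
    (hsparse : ∀ i, s i + j i + t i ≤ 2 → s i = 2 ∧ j i = 0 ∧ t i = 0 ∧ x ≤ 2 * e i) :
    3 * k ≤ ∑ i, (s i + j i + t i) + #{i | s i + j i + t i ≤ 2} :=
  calc 3 * k = ∑ i : Fin k, 3 := by simp [mul_comm]
    _ ≤ ∑ i, (s i + j i + t i + if s i + j i + t i ≤ 2 then 1 else 0) :=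
        sum_le_sum fun i _ => by
          split_ifs with h
          · have := hsparse i h; omega
          · omega
    _ = _ := by rw [sum_add_distrib, card_filter]

lemma two_mul_add_card_sparse_mul_le (h3 : ∀ i, 3 ≤ 2 * s i + j i + 3 * t i)
    (hsparse : ∀ i, s i + j i + t i ≤ 2 → s i = 2 ∧ j i = 0 ∧ t i = 0 ∧ x ≤ 2 * e i) :
    2 * k + #{i | s i + j i + t i ≤ 2} * (2 + x) ≤ 2 * ∑ i, (s i + e i + j i + t i) :=
  calc 2 * k + #{i | s i + j i + t i ≤ 2} * (2 + x)
      = ∑ i, (2 + if s i + j i + t i ≤ 2 then 2 + x else 0) := by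
        simp [sum_add_distrib, sum_ite, mul_comm]
    _ ≤ ∑ i, 2 * (s i + e i + j i + t i) := sum_le_sum fun i _ => by
        have := h3 i
        split_ifs with h
        · have := hsparse i h; omega
        · omega
    _ = _ := (mul_sum _ _ _).symm

theorem min_le_of_triangle_counts {a τ N : ℕ}
    (hN : a + ∑ i, (s i + e i + j i + t i) ≤ N) (hτ : τ ≤ a + ∑ i, e i)
    (h3 : ∀ i, 3 ≤ 2 * s i + j i + 3 * t i)
    (hsparse : ∀ i, s i + j i + t i ≤ 2 →
      x + 1 ≤ s i + e i + j i + t i ∨ s i = 2 ∧ j i = 0 ∧ t i = 0 ∧ x ≤ 2 * e i)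
    (hτ' : ∀ i, s i = 2 → j i = 0 → 3 ≤ x → τ < a + ∑ i, e i) :
    min (τ + 3 * k) (a + x + k) ≤ N := by
  have hsum : ∑ i, (s i + e i + j i + t i) = ∑ i, (s i + j i + t i) + ∑ i, e i := by
    rw [← sum_add_distrib]; exact sum_congr rfl fun i _ => by ring
  by_contra! hlt
  rw [lt_min_iff] at hlt
  have hsparse' : ∀ i, s i + j i + t i ≤ 2 → s i = 2 ∧ j i = 0 ∧ t i = 0 ∧ x ≤ 2 * e i :=
    fun i hi => (hsparse i hi).resolve_left fun hxi => by
      -- every triangle carries a class, so triangle `i` alone cannot carry more than `x`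
      have := add_sum_erase univ (fun i => s i + e i + j i + t i) (mem_univ i)
      have := card_nsmul_le_sum (univ.erase i) (fun i => s i + e i + j i + t i) 1
        fun i' _ => by have := h3 i'; omega
      simp only [card_erase_of_mem (mem_univ i), card_univ, Fintype.card_fin, smul_eq_mul,
        mul_one] at this
      omega
  have hB := three_mul_le_sum_add_card_sparse hsparse'
  have hBx := two_mul_add_card_sparse_mul_le h3 hsparse'
  obtain ⟨i, hi⟩ : ({i | s i + j i + t i ≤ 2} : Finset (Fin k)).Nonempty := card_pos.mp (by omega)
  have hiB := hsparse' i (mem_filter.mp hi).2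
  have hx : 3 ≤ x := by
    have : 2 + x ≤ #{i | s i + j i + t i ≤ 2} * (2 + x) :=
      Nat.le_mul_of_pos_left _ (card_pos.mpr ⟨i, hi⟩)
    omega
  have := hτ' i hiB.1 hiB.2.1 hx
  -- so a second sparse triangle exists, and the two are too expensive
  have : 2 * (2 + x) ≤ #{i | s i + j i + t i ≤ 2} * (2 + x) := Nat.mul_le_mul_right _ (by omega)
  omega

end TriangleCounts

namespace Hk

variable {V : Type*} {H : SimpleGraph V} {k : ℕ}

@[simp] lemma adj_inl_inl {u v : V} : (Hk H k).Adj (.inl u) (.inl v) ↔ H.Adj u v := Iff.rfl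
@[simp] lemma adj_inl_inr {u : V} {w : Fin k × Fin 3} : (Hk H k).Adj (.inl u) (.inr w) := trivial
@[simp] lemma adj_inr_inl {u : V} {w : Fin k × Fin 3} : (Hk H k).Adj (.inr w) (.inl u) := trivial
@[simp] lemma adj_inr_inr {w w' : Fin k × Fin 3} :
    (Hk H k).Adj (.inr w) (.inr w') ↔ w.1 = w'.1 ∧ w.2 ≠ w'.2 := Iff.rfl

lemma exists_inl_mem_or_eq_inr_inr (e : (Hk H k).edgeSet) :
    (∃ u, .inl u ∈ (e : Sym2 (V ⊕ Fin k × Fin 3))) ∨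
      ∃ i a b, a ≠ b ∧ (e : Sym2 (V ⊕ Fin k × Fin 3)) = s(.inr (i, a), .inr (i, b)) := by
  obtain ⟨e, he⟩ := e
  induction e using Sym2.ind with | _ p q => ?_
  rcases p with u | ⟨i, a⟩
  · exact .inl ⟨u, by simp⟩
  rcases q with v | ⟨i', b⟩
  · exact .inl ⟨v, by simp⟩
  obtain ⟨hi, hab⟩ : i = i' ∧ a ≠ b := he
  exact .inr ⟨i, a, b, hab, by simp [hi]⟩

lemma colorable_tauN_add [Fintype V] : (KG (Hk H k)).Colorable (tauN H + 3 * k) := by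
  obtain ⟨S, hS, hcard⟩ := exists_isVertexCover_card_eq_tauN H
  have := KG.colorable_of_forall_exists_mem (F := Hk H k) (S.disjSum univ) fun ⟨e, he⟩ => by
    induction e using Sym2.ind with | _ p q => ?_
    rcases p with u | w
    · rcases q with v | w
      · rcases hS he with hu | hv
        exacts [⟨.inl u, by simpa using hu, by simp⟩, ⟨.inl v, by simpa using hv, by simp⟩]
      · exact ⟨.inr w, by simp, by simp⟩
    · exact ⟨.inr w, by simp, by simp⟩
  simpa [hcard, mul_comm] using this

lemma colorable_card_add [Fintype V] : (KG (Hk H k)).Colorable (Fintype.card V + k) := by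
  have key : ∀ e : (Hk H k).edgeSet, ∃ c : V ⊕ Fin k,
      (∀ u, c = .inl u → .inl u ∈ (e : Sym2 (V ⊕ Fin k × Fin 3))) ∧
      ∀ i, c = .inr i →
        ∃ a b, a ≠ b ∧ (e : Sym2 (V ⊕ Fin k × Fin 3)) = s(.inr (i, a), .inr (i, b)) :=
    fun e => (exists_inl_mem_or_eq_inr_inr e).elim
      (fun ⟨u, hu⟩ => ⟨.inl u, by simpa using hu, by simp⟩)
      (fun ⟨i, a, b, hab, he⟩ => ⟨.inr i, by simp, by simpa using ⟨a, b, hab, he⟩⟩)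
  choose f hf using key
  have := (KG.coloringOfMeet f fun e e' heq => by
    have hfe := hf e
    rw [heq] at hfe
    cases hc : f e' with
    | inl u => exact ⟨_, hfe.1 u hc, (hf e').1 u hc⟩
    | inr i =>
      obtain ⟨a, b, hab, he⟩ := hfe.2 i hc
      obtain ⟨c, d, hcd, he'⟩ := (hf e').2 i hc
      rw [he, he']
      have : a = c ∨ a = d ∨ b = c ∨ b = d := by clear he he'; revert a b c d; decide
      rcases this with rfl | rfl | rfl | rfl <;> simp).colorable
  simpa using this

variable (V k) in
/-- The shapes of a colour class of `KG (Hk H k)`: a star at a vertex `u` of `H` or at a triangle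
vertex `w`; the triangle on an edge `uv` of `H` and `w`; the triangle on `u` and the corners `j`,
`j'` of triangle `i`; triangle `i` itself. -/
inductive Shape
  | starV (u : V)
  | starT (w : Fin k × Fin 3)
  | triEdge (w : Fin k × Fin 3) (u v : V)
  | triJoin (i : Fin k) (j j' : Fin 3) (u : V)
  | triInner (i : Fin k)

variable (H) in
def Shape.Mem : Shape V k → Sym2 (V ⊕ Fin k × Fin 3) → Prop
  | .starV u, e => .inl u ∈ e
  | .starT w, e => .inr w ∈ e
  | .triEdge w u v, e => H.Adj u v ∧ ∀ x ∈ e, x = .inl u ∨ x = .inl v ∨ x = .inr w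
  | .triJoin i j j' u, e => ∀ x ∈ e, x = .inl u ∨ x = .inr (i, j) ∨ x = .inr (i, j')
  | .triInner i, e => ∀ x ∈ e, ∃ j, x = .inr (i, j)

/-- The triangle a shape sits at, and which of `starT`, `triEdge`, `triJoin`, `triInner`
(numbered `0` to `3`) it is. -/
def Shape.kind : Shape V k → Option (Fin k × Fin 4)
  | .starV _ => none
  | .starT w => some (w.1, 0)
  | .triEdge w _ _ => some (w.1, 1)
  | .triJoin i _ _ _ => some (i, 2)
  | .triInner i => some (i, 3)

def Shape.baseEdges : Shape V k → Finset (Sym2 V)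
  | .triEdge _ u v => {s(u, v)}
  | _ => ∅

lemma exists_shape_of_triangle (htf : H.CliqueFree 3) {p q r : V ⊕ Fin k × Fin 3}
    (hpq : (Hk H k).Adj p q) (hpr : (Hk H k).Adj p r) (hqr : (Hk H k).Adj q r) :
    ∃ t : Shape V k, ∀ e, (∀ x ∈ e, x = p ∨ x = q ∨ x = r) → t.Mem H e := by
  rcases p with u | w <;> rcases q with v | w' <;> rcases r with z | w'' <;>
    simp only [adj_inl_inl, adj_inl_inr, adj_inr_inl, adj_inr_inr] at hpq hpr hqr
  · exact (isIndepSet_neighborSet_of_triangleFree _ htf u hpq hpr hqr.ne hqr).elim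
  · exact ⟨.triEdge w'' u v, fun e he => ⟨hpq, fun x hx => by grind⟩⟩
  · exact ⟨.triEdge w' u z, fun e he => ⟨hpr, fun x hx => by grind⟩⟩
  · exact ⟨.triJoin w'.1 w'.2 w''.2 u, fun e he x hx => by grind⟩
  · exact ⟨.triEdge w v z, fun e he => ⟨hqr, fun x hx => by grind⟩⟩
  · exact ⟨.triJoin w.1 w.2 w''.2 v, fun e he x hx => by grind⟩
  · exact ⟨.triJoin w.1 w.2 w'.2 z, fun e he x hx => by grind⟩
  · exact ⟨.triInner w.1, fun e he x hx => by grind⟩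

lemma exists_shape (htf : H.CliqueFree 3) [Nonempty V] {α : Type*}
    (C : (KG (Hk H k)).Coloring α) : ∃ tg : α → Shape V k, ∀ e, (tg (C e)).Mem H e := by
  suffices ∀ c, ∃ t : Shape V k, ∀ e, C e = c → t.Mem H e by
    choose tg htg using this
    exact ⟨tg, fun e => htg _ e rfl⟩
  intro c
  let K : Set (Sym2 (V ⊕ Fin k × Fin 3)) := {e | ∃ h : e ∈ (Hk H k).edgeSet, C ⟨e, h⟩ = c}
  have hdiag : ∀ e ∈ K, ¬ e.IsDiag := fun e ⟨he, _⟩ => (Hk H k).not_isDiag_of_mem_edgeSet he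
  have hmeet : ∀ e ∈ K, ∀ f ∈ K, ∃ x, x ∈ e ∧ x ∈ f := fun e ⟨he, hce⟩ f ⟨hf, hcf⟩ =>
    KG.exists_mem_mem_of_color_eq C (f := ⟨f, hf⟩) (hce.trans hcf.symm)
  rcases Sym2.star_or_triangle hdiag hmeet with ⟨p | w, hp⟩ | ⟨p, q, r, hpq, hpr, hqr, hK⟩
  · exact ⟨.starV p, fun e hce => hp e ⟨e.2, hce⟩⟩
  · exact ⟨.starT w, fun e hce => hp e ⟨e.2, hce⟩⟩
  · obtain ⟨t, ht⟩ := exists_shape_of_triangle htf hpq.1 hpr.1 hqr.1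
    exact ⟨t, fun e hce => ht e (hK e ⟨e.2, hce⟩)⟩

section ShapeCounts

open scoped Classical

lemma card_filter_mem_triangle_le (t : Shape V k) (i : Fin k) :
    #{m : Fin 3 | t.Mem H s(.inr (i, m + 1), .inr (i, m + 2))} ≤
      2 * (if t.kind = some (i, 0) then 1 else 0) + (if t.kind = some (i, 2) then 1 else 0) +
        3 * (if t.kind = some (i, 3) then 1 else 0) := by
  cases t with
  | starV u => simp [Shape.Mem, Shape.kind]
  | starT w =>
    obtain ⟨i', j⟩ := w
    by_cases h : i' = i
    · subst h
      simp only [Shape.Mem, Sym2.mem_iff, Sum.inr.injEq, Prod.mk.injEq, true_and, Shape.kind,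
        ↓reduceIte, mul_one, Option.some.injEq, Fin.reduceEq, and_false, add_zero, mul_zero]
      revert j; decide
    · simp [Shape.Mem, Shape.kind, h]
  | triEdge w u v =>
    simp only [Shape.Mem, Sym2.mem_iff, forall_eq_or_imp, reduceCtorEq, Sum.inr.injEq, false_or,
      forall_eq, Shape.kind, Option.some.injEq, Prod.mk.injEq, one_ne_zero, and_false, ↓reduceIte,
      mul_zero, Fin.reduceEq, add_zero, nonpos_iff_eq_zero, card_eq_zero, filter_eq_empty_iff,
      mem_univ, not_and, forall_const]
    intro m _ h1 h2
    simp [← h2] at h1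
  | triJoin i' j j' u =>
    by_cases h : i' = i
    · subst h
      simp only [Shape.Mem, Sym2.mem_iff, forall_eq_or_imp, reduceCtorEq, Sum.inr.injEq,
        Prod.mk.injEq, true_and, false_or, forall_eq, Shape.kind, Option.some.injEq, Fin.reduceEq,
        and_false, ↓reduceIte, mul_zero, zero_add, add_zero]
      revert j j'; decide
    · simp [Shape.Mem, Shape.kind, h, Ne.symm h]
  | triInner i' =>
    by_cases h : i' = i
    · subst h
      simp [Shape.Mem, Shape.kind]
    · simp [Shape.Mem, Shape.kind, h, Ne.symm h]

lemma card_filter_mem_join_le (t : Shape V k) (i : Fin k) {U : Finset V} {J : Finset (Fin 3)}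
    (hU : ∀ u ∈ U, t ≠ .starV u) (hJ : ∀ j ∈ J, t ≠ .starT (i, j)) :
    #{x ∈ U ×ˢ J | t.Mem H s(.inl x.1, .inr (i, x.2))} ≤
      2 * (if t.kind = some (i, 1) then 1 else 0) +
        2 * (if t.kind = some (i, 2) then 1 else 0) := by
  cases t with
  | starV u =>
    simp only [Shape.Mem, Sym2.mem_iff, Sum.inl.injEq, reduceCtorEq, or_false, Shape.kind,
      ↓reduceIte, mul_zero, add_zero, nonpos_iff_eq_zero, card_eq_zero, filter_eq_empty_iff,
      mem_product, and_imp, Prod.forall]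
    exact fun a _ ha _ h => hU a ha (h ▸ rfl)
  | starT w =>
    simp only [Shape.Mem, Sym2.mem_iff, reduceCtorEq, Sum.inr.injEq, false_or, Shape.kind,
      Option.some.injEq, Prod.mk.injEq, zero_ne_one, and_false, ↓reduceIte, mul_zero, Fin.reduceEq,
      add_zero, nonpos_iff_eq_zero, card_eq_zero, filter_eq_empty_iff, mem_product, and_imp,
      Prod.forall]
    exact fun _ b _ hb h => hJ b hb (h ▸ rfl)
  | triEdge w u v =>
    obtain ⟨i', j0⟩ := w
    by_cases h : i' = i
    · subst h
      simp only [Shape.Mem, Sym2.mem_iff, forall_eq_or_imp, Sum.inl.injEq, reduceCtorEq, or_false,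
        forall_eq, Sum.inr.injEq, Prod.mk.injEq, true_and, false_or, Shape.kind, ↓reduceIte,
        mul_one, Option.some.injEq, Fin.reduceEq, and_false, mul_zero, add_zero]
      refine (card_le_card fun x hx => ?_).trans (card_le_two (a := (u, j0)) (b := (v, j0)))
      simp only [mem_filter, mem_product] at hx
      grind
    · simp [Shape.Mem, Shape.kind, h, Ne.symm h]
  | triJoin i' j j' u =>
    by_cases h : i' = i
    · subst h
      simp only [Shape.Mem, Sym2.mem_iff, forall_eq_or_imp, Sum.inl.injEq, reduceCtorEq, or_self,
        or_false, forall_eq, Sum.inr.injEq, Prod.mk.injEq, true_and, false_or, Shape.kind,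
        Option.some.injEq, Fin.reduceEq, and_false, ↓reduceIte, mul_zero, mul_one, zero_add]
      refine (card_le_card fun x hx => ?_).trans (card_le_two (a := (u, j)) (b := (u, j')))
      simp only [mem_filter, mem_product] at hx
      grind
    · simp [Shape.Mem, Shape.kind, h, Ne.symm h]
  | triInner i' => simp [Shape.Mem, Shape.kind]

end ShapeCounts

section Coloring

variable {α : Type*} [Fintype α] (tg : α → Shape V k)

def numClasses (i : Fin k) (m : Fin 4) : ℕ := #{c | (tg c).kind = some (i, m)}

open scoped Classical in
noncomputable def starCenters [Fintype V] : Finset V := {u | ∃ c, tg c = .starV u}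

open scoped Classical in
noncomputable def freeCorners (i : Fin k) : Finset (Fin 3) := {j | ∀ c, tg c ≠ .starT (i, j)}

open scoped Classical in
noncomputable def baseEdgesOf : Finset (Sym2 V) := univ.biUnion fun c => (tg c).baseEdges

lemma card_starCenters_add_sum_le [Fintype V] :
    #(starCenters tg) + ∑ i, (numClasses tg i 0 + numClasses tg i 1 + numClasses tg i 2 +
      numClasses tg i 3) ≤ Fintype.card α := by
  classical
  have hfib := card_eq_sum_card_fiberwise (s := univ) (t := univ)
    (f := fun c => (tg c).kind) fun _ _ => mem_univ _
  rw [Fintype.sum_option, Fintype.sum_prod_type] at hfib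
  have hV : #(starCenters tg) ≤ #{c | (tg c).kind = none} :=
    card_le_card_of_forall_subsingleton (fun u c => tg c = .starV u)
      (fun u hu => by
        obtain ⟨c, hc⟩ := (mem_filter.mp hu).2
        exact ⟨c, mem_filter.mpr ⟨mem_univ _, by rw [hc]; rfl⟩, hc⟩)
      (fun c _ u ⟨_, hu⟩ u' ⟨_, hu'⟩ => by simpa using hu.symm.trans hu')
  simp only [card_univ, numClasses, Fin.sum_univ_four] at hfib ⊢
  omega

lemma card_baseEdgesOf_le : #(baseEdgesOf tg) ≤ ∑ i, numClasses tg i 1 := by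
  classical
  calc #(baseEdgesOf tg) ≤ ∑ c, #(tg c).baseEdges := card_biUnion_le
    _ = ∑ c, ∑ i, if (tg c).kind = some (i, 1) then 1 else 0 := by
        refine sum_congr rfl fun c _ => ?_
        cases tg c <;> simp [Shape.baseEdges, Shape.kind]
    _ = ∑ i, numClasses tg i 1 := by
        rw [sum_comm]; simp only [numClasses, card_filter]

lemma three_sub_numClasses_le_card_freeCorners (i : Fin k) :
    3 - numClasses tg i 0 ≤ #(freeCorners tg i) := by
  classical
  have hstar : #{j | ∃ c, tg c = .starT (i, j)} ≤ numClasses tg i 0 :=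
    card_le_card_of_forall_subsingleton (fun j c => tg c = .starT (i, j))
      (fun j hj => by
        obtain ⟨c, hc⟩ := (mem_filter.mp hj).2
        exact ⟨c, mem_filter.mpr ⟨mem_univ _, by rw [hc]; rfl⟩, hc⟩)
      (fun c _ j ⟨_, hj⟩ j' ⟨_, hj'⟩ => by simpa using hj.symm.trans hj')
  have := card_filter_add_card_filter_not (s := univ)
    (fun j : Fin 3 => ∃ c, tg c = .starT (i, j))
  simp only [card_univ, Fintype.card_fin, not_exists] at this
  simp only [freeCorners, ne_eq]
  omega

variable {tg}

lemma mem_starCenters_of_eq [Fintype V] {c : α} {u : V} (hc : tg c = .starV u) :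
    u ∈ starCenters tg := by
  classical exact mem_filter.mpr ⟨mem_univ _, c, hc⟩

lemma mem_baseEdgesOf_of_eq {c : α} {w : Fin k × Fin 3} {u v : V} (hc : tg c = .triEdge w u v) :
    s(u, v) ∈ baseEdgesOf tg := by
  classical exact mem_biUnion.mpr ⟨c, mem_univ _, by simp [hc, Shape.baseEdges]⟩

open scoped Classical

variable {C : (KG (Hk H k)).Coloring α} (htg : ∀ e, (tg (C e)).Mem H e)
include htg

lemma three_le_numClasses (i : Fin k) :
    3 ≤ 2 * numClasses tg i 0 + numClasses tg i 2 + 3 * numClasses tg i 3 := by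
  -- the edges of triangle `i`, indexed by the opposite corner
  let g : Fin 3 → (Hk H k).edgeSet := fun m => ⟨s(.inr (i, m + 1), .inr (i, m + 2)), rfl, by simp⟩
  calc 3 = #(univ : Finset (Fin 3)) := rfl
    _ ≤ _ := card_le_sum_of_card_fiber_le _ (fun m => C (g m)) _ fun c =>
        (card_le_card (monotone_filter_right _ fun m _ hm => hm ▸ htg (g m))).trans
          (card_filter_mem_triangle_le (tg c) i)
    _ = _ := by simp only [sum_add_distrib, ← mul_sum, numClasses, card_filter]

lemma card_compl_starCenters_mul_le [Fintype V] (i : Fin k) :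
    #(starCenters tg)ᶜ * #(freeCorners tg i) ≤ 2 * (numClasses tg i 1 + numClasses tg i 2) := by
  let g : V × Fin 3 → (Hk H k).edgeSet := fun x => ⟨s(.inl x.1, .inr (i, x.2)), trivial⟩
  calc #(starCenters tg)ᶜ * #(freeCorners tg i) = #((starCenters tg)ᶜ ×ˢ freeCorners tg i) :=
        (card_product _ _).symm
    _ ≤ _ := card_le_sum_of_card_fiber_le _ (fun x => C (g x)) _ fun c =>
        (card_le_card (monotone_filter_right _ fun x _ hx => hx ▸ htg (g x))).trans
          (card_filter_mem_join_le (tg c) i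
            (fun u hu hc => mem_compl.mp hu (mem_starCenters_of_eq hc))
            (fun j hj hc => (mem_filter.mp hj).2 c hc))
    _ = _ := by simp only [sum_add_distrib, ← mul_sum, numClasses, card_filter, mul_add]

lemma mem_starCenters_or_mem_starCenters_or_mem_baseEdgesOf [Fintype V] ⦃u v : V⦄
    (huv : H.Adj u v) : u ∈ starCenters tg ∨ v ∈ starCenters tg ∨ s(u, v) ∈ baseEdgesOf tg := by
  have h := htg ⟨s(.inl u, .inl v), huv⟩
  cases hc : tg (C ⟨s(.inl u, .inl v), huv⟩) <;> rw [hc] at h <;>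
    simp only [Shape.Mem, Sym2.mem_iff, Sum.inl.injEq, reduceCtorEq, or_self, or_false,
      forall_eq_or_imp, forall_eq, exists_const, and_self] at h
  case starV u' =>
    rcases h with rfl | rfl
    exacts [.inl (mem_starCenters_of_eq hc), .inr (.inl (mem_starCenters_of_eq hc))]
  case triEdge w u' v' =>
    have := mem_baseEdgesOf_of_eq hc
    obtain ⟨-, rfl | rfl, rfl | rfl⟩ := h
    · exact (huv.ne rfl).elim
    · exact .inr (.inr this)
    · exact .inr (.inr (Sym2.eq_swap ▸ this))
    · exact (huv.ne rfl).elim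
  case triJoin => exact (huv.ne (h.1.trans h.2.symm)).elim

lemma exists_adj_mem_baseEdgesOf [Fintype V] {i : Fin k} {j : Fin 3}
    (hj : j ∈ freeCorners tg i) (hi : numClasses tg i 2 = 0) {u : V} (hu : u ∉ starCenters tg) :
    ∃ v, H.Adj u v ∧ s(u, v) ∈ baseEdgesOf tg := by
  set c := C ⟨s(.inl u, .inr (i, j)), trivial⟩
  have h := htg ⟨s(.inl u, .inr (i, j)), trivial⟩
  cases hc : tg c <;> rw [hc] at h <;>
    simp only [Shape.Mem, Sym2.mem_iff, Sum.inl.injEq, Sum.inr.injEq, Prod.mk.injEq, reduceCtorEq,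
      or_self, or_false, false_or, forall_eq_or_imp, forall_eq, exists_const, exists_and_left,
      ↓existsAndEq, and_true, false_and] at h
  case starV u' => exact (hu (h ▸ mem_starCenters_of_eq hc)).elim
  case starT w => exact ((mem_filter.mp hj).2 c (h ▸ hc)).elim
  case triEdge w u' v' =>
    have := mem_baseEdgesOf_of_eq hc
    obtain ⟨hadj, rfl | rfl, -⟩ := h
    exacts [⟨v', hadj, this⟩, ⟨u', hadj.symm, Sym2.eq_swap ▸ this⟩]
  case triJoin i' j₁ j₂ u' =>
    have : c ∈ ({c | (tg c).kind = some (i, 2)} : Finset α) := by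
      simp [hc, Shape.kind, h.2.elim And.left And.left]
    exact ((card_pos.mpr ⟨c, this⟩).ne' hi).elim

lemma sparse_triangle_dichotomy [Fintype V] (i : Fin k)
    (hi : numClasses tg i 0 + numClasses tg i 2 + numClasses tg i 3 ≤ 2) :
    #(starCenters tg)ᶜ + 1 ≤
        numClasses tg i 0 + numClasses tg i 1 + numClasses tg i 2 + numClasses tg i 3 ∨
      numClasses tg i 0 = 2 ∧ numClasses tg i 2 = 0 ∧ numClasses tg i 3 = 0 ∧
        #(starCenters tg)ᶜ ≤ 2 * numClasses tg i 1 := by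
  have h1 := three_le_numClasses htg i
  have h2 : (3 - numClasses tg i 0) * #(starCenters tg)ᶜ ≤
      2 * (numClasses tg i 1 + numClasses tg i 2) :=
    calc _ ≤ #(starCenters tg)ᶜ * #(freeCorners tg i) := by
          rw [mul_comm]; exact Nat.mul_le_mul_left _ (three_sub_numClasses_le_card_freeCorners tg i)
      _ ≤ _ := card_compl_starCenters_mul_le htg i
  have : numClasses tg i 0 ≤ 2 := by omega
  interval_cases numClasses tg i 0 <;> omega

end Coloring

theorem min_le_card_of_coloring [Fintype V] (hconn : H.Connected) (htf : H.CliqueFree 3)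
    {α : Type*} [Fintype α] (C : (KG (Hk H k)).Coloring α) :
    min (tauN H + 3 * k) (Fintype.card V + k) ≤ Fintype.card α := by
  classical
  have := hconn.nonempty
  obtain ⟨tg, htg⟩ := exists_shape htf C
  have hcover := mem_starCenters_or_mem_starCenters_or_mem_baseEdgesOf htg
  rw [← card_add_card_compl (starCenters tg)]
  refine min_le_of_triangle_counts (card_starCenters_add_sum_le tg)
    ((tauN_le_card_add_card hcover).trans (Nat.add_le_add_left (card_baseEdgesOf_le tg) _))
    (three_le_numClasses htg) (sparse_triangle_dichotomy htg) fun i hs hj hx => ?_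
  obtain ⟨c, hc⟩ : (freeCorners tg i).Nonempty :=
    card_pos.mp (by have := three_sub_numClasses_le_card_freeCorners tg i; omega)
  exact (tauN_lt_card_add_card hconn htf hcover
    (fun u hu => exists_adj_mem_baseEdgesOf htg hc hj hu) hx).trans_le
    (Nat.add_le_add_left (card_baseEdgesOf_le tg) _)

end Hk

theorem chromNum_KG_Hk_general {V : Type*} [Fintype V] (H : SimpleGraph V)
    (hconn : H.Connected) (htf : H.CliqueFree 3)
    (k : ℕ) :
    chromNum (KG (Hk H k)) = min (tauN H + 3 * k) (Fintype.card V + k) := by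
  have hcol : (KG (Hk H k)).Colorable (min (tauN H + 3 * k) (Fintype.card V + k)) := by
    rcases min_choice (tauN H + 3 * k) (Fintype.card V + k) with h | h <;> rw [h]
    exacts [Hk.colorable_tauN_add, Hk.colorable_card_add]
  refine le_antisymm (Nat.sInf_le hcol) (le_csInf ⟨_, hcol⟩ fun n ⟨C⟩ => ?_)
  simpa using Hk.min_le_card_of_coloring hconn htf C

/-- For a connected triangle-free graph `H` with at least one edge, the chromatic number
of the complement of the line graph of the join of `H` with `k` disjoint triangles. -/
theorem chromNum_KG_Hk {V : Type*} [Fintype V] (H : SimpleGraph V)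
    (hconn : H.Connected) (htf : H.CliqueFree 3) (hE : H.edgeSet.Nonempty)
    (k : ℕ) (hk : 1 ≤ k) :
    chromNum (KG (Hk H k)) = min (tauN H + 3 * k) (Fintype.card V + k) :=
  chromNum_KG_Hk_general H hconn htf k
end
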